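/- Let C, C', P, Q be n×n real matrices. Assume (i) PCQ ≥ PC'Q entrywise; (ii) C' has an eigenvector Qu for a real eigenvalue λ', where u is a nonnegative column vector; (iii) C has a left eigenvector v^T P for a real eigenvalue λ, where v is a nonnegative row vector; and (iv) v^T P Q u > 0. Then λ ≥ λ'. Moreover, λ = λ' if and only if (PC'Q)_{ij} = (PCQ)_{ij} for all pairs (i,j) with v_i ≠ 0 and u_j ≠ 0. -/

import Mathlib

/-!
Both eigen-relations evaluate the same bilinear form: `vᵀ (P C Q) u = λ · vᵀ P Q u` and
`vᵀ (P C' Q) u = λ' · vᵀ P Q u`. Hence `(λ - λ') · vᵀ P Q u = vᵀ D u` with `D = PCQ - PC'Q ≥ 0`.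
As `u, v ≥ 0`, the right side is a sum of nonnegative terms `v i * D i j * u j`, so it is
nonnegative, and it vanishes exactly when `D i j = 0` wherever `v i ≠ 0` and `u j ≠ 0`.
-/

open Matrix

section Nonneg

variable {m n R : Type*} [Fintype m] [Fintype n] [Semiring R]

lemma dotProduct_mulVec_eq_sum_sum (D : Matrix m n R) (v : m → R) (u : n → R) :
    v ⬝ᵥ D *ᵥ u = ∑ i, ∑ j, v i * (D i j * u j) := by
  simp only [dotProduct, mulVec, Finset.mul_sum]

variable [PartialOrder R] [IsOrderedRing R] {D : Matrix m n R} {v : m → R} {u : n → R}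

lemma dotProduct_mulVec_nonneg (hD : ∀ i j, 0 ≤ D i j) (hv : ∀ i, 0 ≤ v i) (hu : ∀ j, 0 ≤ u j) :
    0 ≤ v ⬝ᵥ D *ᵥ u := by
  rw [dotProduct_mulVec_eq_sum_sum]
  exact Finset.sum_nonneg fun i _ => Finset.sum_nonneg fun j _ =>
    mul_nonneg (hv i) (mul_nonneg (hD i j) (hu j))

lemma dotProduct_mulVec_eq_zero_iff [NoZeroDivisors R]
    (hD : ∀ i j, 0 ≤ D i j) (hv : ∀ i, 0 ≤ v i) (hu : ∀ j, 0 ≤ u j) :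
    v ⬝ᵥ D *ᵥ u = 0 ↔ ∀ i j, v i ≠ 0 → u j ≠ 0 → D i j = 0 := by
  have hterm : ∀ i j, 0 ≤ v i * (D i j * u j) := fun i j =>
    mul_nonneg (hv i) (mul_nonneg (hD i j) (hu j))
  rw [dotProduct_mulVec_eq_sum_sum,
    Finset.sum_eq_zero_iff_of_nonneg fun i _ => Finset.sum_nonneg fun j _ => hterm i j]
  simp only [Finset.mem_univ, true_implies,
    Finset.sum_eq_zero_iff_of_nonneg fun j _ => hterm _ j, mul_eq_zero]
  grind

end Nonneg

section Eigen

variable {l m o R : Type*} [Fintype l] [Fintype m] [Fintype o] [CommSemiring R]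
  {P : Matrix l m R} {C : Matrix m m R} {Q : Matrix m o R} {v : l → R} {u : o → R} {c : R}

lemma dotProduct_mul_mul_mulVec_of_vecMul_eq_smul (h : (v ᵥ* P) ᵥ* C = c • (v ᵥ* P)) :
    v ⬝ᵥ (P * C * Q) *ᵥ u = c * ((v ᵥ* P) ⬝ᵥ Q *ᵥ u) := by
  rw [← mulVec_mulVec, dotProduct_mulVec, ← vecMul_vecMul, h, smul_dotProduct, smul_eq_mul]

lemma dotProduct_mul_mul_mulVec_of_mulVec_eq_smul (h : C *ᵥ (Q *ᵥ u) = c • Q *ᵥ u) :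
    v ⬝ᵥ (P * C * Q) *ᵥ u = c * ((v ᵥ* P) ⬝ᵥ Q *ᵥ u) := by
  rw [← mulVec_mulVec, ← mulVec_mulVec, h, mulVec_smul, dotProduct_smul, smul_eq_mul,
    dotProduct_mulVec]

end Eigen

theorem stmt_3 {n : ℕ} (C C' P Q : Matrix (Fin n) (Fin n) ℝ)
    (u v : Fin n → ℝ) (lam lam' : ℝ)
    (h1 : ∀ i j, (P * C' * Q) i j ≤ (P * C * Q) i j)
    (hu : ∀ j, 0 ≤ u j)
    (h2 : C'.mulVec (Q.mulVec u) = lam' • Q.mulVec u)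
    (hv : ∀ i, 0 ≤ v i)
    (h3 : Matrix.vecMul (Matrix.vecMul v P) C = lam • Matrix.vecMul v P)
    (h4 : 0 < dotProduct (Matrix.vecMul v P) (Q.mulVec u)) :
    lam' ≤ lam ∧
      (lam = lam' ↔ ∀ i j, v i ≠ 0 → u j ≠ 0 → (P * C' * Q) i j = (P * C * Q) i j) := by
  have hD : ∀ i j, 0 ≤ (P * C * Q - P * C' * Q) i j := fun i j => sub_nonneg.2 (h1 i j)
  have hform : v ⬝ᵥ (P * C * Q - P * C' * Q) *ᵥ u = (lam - lam') * ((v ᵥ* P) ⬝ᵥ Q *ᵥ u) := by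
    rw [sub_mulVec, dotProduct_sub, dotProduct_mul_mul_mulVec_of_vecMul_eq_smul h3,
      dotProduct_mul_mul_mulVec_of_mulVec_eq_smul h2, sub_mul]
  refine ⟨?_, ?_⟩
  · have hnonneg := hform ▸ dotProduct_mulVec_nonneg hD hv hu
    exact sub_nonneg.1 ((mul_nonneg_iff_of_pos_right h4).1 hnonneg)
  · rw [← sub_eq_zero, ← mul_eq_zero_iff_right h4.ne', ← hform,
      dotProduct_mulVec_eq_zero_iff hD hv hu]
    simp only [Matrix.sub_apply, sub_eq_zero, eq_comm (a := (P * C * Q) _ _)]
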